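/- arXiv:2105.13314 — 2 statements merged into one kernel-verified Lean document; each statement's English description precedes it below -/
import Mathlib

section
/- Let t > 0 and n = |x−y|₁ ≥ 1. Then e^{−t} Σ_{m ≥ n} 4^m Σ_{j ≥ m} t^j/j! ≤ exp{4t + n log(4t) − (n/2) log n + (n/2) log 2}. -/
/-!
Since `(i + m)! ≥ i! m!`, the tail `Σ_{j ≥ m} t^j/j!` is at most `t^m/m! · e^t`. Summing this
over `m ≥ n` with weights `4^m` and using the same tail bound for `4t` gives
`e^{-t} Σ ≤ (4t)^n/n! · e^{4t}`. Finally `n!^2 = ∏_{k<n} (k+1)(n-k) ≥ n^n`, so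
`log n! ≥ (n/2) log n ≥ (n/2) log (n/2)`.
-/

open Real Nat Finset

theorem Nat.pow_self_le_factorial_sq (n : ℕ) : n ^ n ≤ n ! ^ 2 := by
  have hrev : ∏ k ∈ range n, (n - k) = n ! := by
    rw [← prod_range_add_one_eq_factorial, ← prod_range_reflect]
    exact prod_congr rfl fun k hk => by rw [mem_range] at hk; omega
  calc n ^ n = ∏ _k ∈ range n, n := by rw [prod_const, card_range]
    _ ≤ ∏ k ∈ range n, (k + 1) * (n - k) := prod_le_prod' fun k hk => by
        obtain ⟨j, rfl⟩ := Nat.exists_eq_add_of_lt (mem_range.mp hk)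
        rw [show k + j + 1 - k = j + 1 by omega]
        nlinarith
    _ = n ! ^ 2 := by rw [prod_mul_distrib, prod_range_add_one_eq_factorial, hrev, sq]

theorem Real.half_mul_log_le_log_factorial (n : ℕ) : (n / 2 : ℝ) * log n ≤ log n ! := by
  have h : ((n : ℝ) ^ n) ≤ (n ! : ℝ) ^ 2 := by exact_mod_cast Nat.pow_self_le_factorial_sq n
  have hlog := log_le_log (by exact_mod_cast pow_self_pos) h
  rw [log_pow, log_pow] at hlog
  push_cast at hlog
  linarith

theorem tsum_ite_le_eq_tsum_nat_add {G : Type*} [AddCommGroup G] [TopologicalSpace G]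
    [IsTopologicalAddGroup G] [T2Space G] (f : ℕ → G) (n : ℕ) :
    ∑' m, (if n ≤ m then f m else 0) = ∑' i, f (i + n) := by
  set g : ℕ → G := fun m => if n ≤ m then f m else 0
  have hshift : (fun i => g (i + n)) = fun i => f (i + n) :=
    funext fun i => if_pos (Nat.le_add_left n i)
  by_cases hf : Summable fun i => f (i + n)
  · have hhead : ∑ i ∈ range n, g i = 0 :=
      sum_eq_zero fun i hi => if_neg (by rw [mem_range] at hi; omega)
    have hg : Summable g := (summable_nat_add_iff n).mp (hshift ▸ hf)
    rw [← hg.sum_add_tsum_nat_add n, hhead, zero_add, hshift]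
  · rw [tsum_eq_zero_of_not_summable hf, tsum_eq_zero_of_not_summable]
    rwa [← summable_nat_add_iff n, hshift]

theorem Real.tsum_pow_add_div_factorial_le {x : ℝ} (hx : 0 ≤ x) (n : ℕ) :
    ∑' i, x ^ (i + n) / (i + n)! ≤ x ^ n / n ! * exp x := by
  have hexp := summable_pow_div_factorial x
  calc ∑' i, x ^ (i + n) / (i + n)! ≤ ∑' i, x ^ n / n ! * (x ^ i / i !) := by
        refine Summable.tsum_le_tsum (fun i => ?_) ((summable_nat_add_iff n).mpr hexp)
          (hexp.mul_left _)
        have hfact : (i ! * n ! : ℝ) ≤ (i + n)! := by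
          exact_mod_cast
            Nat.le_of_dvd (factorial_pos _) (factorial_mul_factorial_dvd_factorial_add i n)
        calc x ^ (i + n) / (i + n)! ≤ x ^ (i + n) / (i ! * n !) := by gcongr
          _ = x ^ n / n ! * (x ^ i / i !) := by rw [pow_add]; field_simp
    _ = x ^ n / n ! * exp x := by
        rw [tsum_mul_left, exp_eq_exp_ℝ, (NormedSpace.expSeries_div_hasSum_exp x).tsum_eq]

theorem Real.tsum_ite_le_pow_div_factorial_le {x : ℝ} (hx : 0 ≤ x) (n : ℕ) :
    ∑' m, (if n ≤ m then x ^ m / m ! else 0) ≤ x ^ n / n ! * exp x := by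
  rw [tsum_ite_le_eq_tsum_nat_add]
  exact tsum_pow_add_div_factorial_le hx n

theorem Real.tsum_ite_le_pow_mul_exp_tail_le {c t : ℝ} (hc : 0 ≤ c) (ht : 0 ≤ t) (n : ℕ) :
    ∑' m, (if n ≤ m then c ^ m * ∑' j, (if m ≤ j then t ^ j / j ! else 0) else 0)
      ≤ (c * t) ^ n / n ! * exp (c * t) * exp t := by
  have hterm (m : ℕ) : c ^ m * ∑' j, (if m ≤ j then t ^ j / j ! else 0)
      ≤ (c * t) ^ m / m ! * exp t :=
    calc _ ≤ c ^ m * (t ^ m / m ! * exp t) := by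
          gcongr; exact tsum_ite_le_pow_div_factorial_le ht m
      _ = (c * t) ^ m / m ! * exp t := by rw [mul_pow]; ring
  have hnonneg (m : ℕ) : 0 ≤ c ^ m * ∑' j, (if m ≤ j then t ^ j / j ! else 0) :=
    mul_nonneg (by positivity) (tsum_nonneg fun j => by split_ifs <;> positivity)
  have hmaj : Summable fun i => (c * t) ^ (i + n) / (i + n)! * exp t :=
    ((summable_nat_add_iff n).mpr (summable_pow_div_factorial _)).mul_right _
  rw [tsum_ite_le_eq_tsum_nat_add]
  calc _ ≤ ∑' i, (c * t) ^ (i + n) / (i + n)! * exp t :=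
        Summable.tsum_le_tsum (fun i => hterm _)
          (.of_nonneg_of_le (fun i => hnonneg _) (fun i => hterm _) hmaj) hmaj
    _ = (∑' i, (c * t) ^ (i + n) / (i + n)!) * exp t := tsum_mul_right
    _ ≤ _ := by gcongr; exact tsum_pow_add_div_factorial_le (by positivity) n

theorem Real.pow_div_factorial_mul_exp_le {x : ℝ} (hx : 0 < x) (n : ℕ) :
    x ^ n / n ! * exp x
      ≤ exp (x + n * log x - (n / 2 : ℝ) * log n + (n / 2 : ℝ) * log 2) := by
  have hlog2 : 0 ≤ (n / 2 : ℝ) * log 2 := mul_nonneg (by positivity) (log_nonneg one_le_two)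
  calc x ^ n / n ! * exp x = exp (x + n * log x - log n !) := by
        rw [exp_sub, exp_add, exp_nat_mul, exp_log hx, exp_log (by positivity)]; ring
    _ ≤ _ := exp_le_exp.mpr (by linarith [half_mul_log_le_log_factorial n])

theorem stmt1_general (t : ℝ) (ht : 0 < t) (n : ℕ) :
    Real.exp (-t) *
      ∑' m : ℕ, (if n ≤ m then
        (4 : ℝ) ^ m * ∑' j : ℕ, (if m ≤ j then t ^ j / (Nat.factorial j : ℝ) else 0)
      else 0)
    ≤ Real.exp (4 * t + n * Real.log (4 * t) - (n / 2 : ℝ) * Real.log n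
        + (n / 2 : ℝ) * Real.log 2) := by
  calc _ ≤ exp (-t) * ((4 * t) ^ n / n ! * exp (4 * t) * exp t) := by
        gcongr
        exact tsum_ite_le_pow_mul_exp_tail_le (by norm_num) ht.le n
    _ = (4 * t) ^ n / n ! * exp (4 * t) := by
        rw [mul_comm, mul_assoc, ← exp_add, add_neg_cancel, exp_zero, mul_one]
    _ ≤ _ := pow_div_factorial_mul_exp_le (by positivity) n

/-- Key analytic estimate in the light-cone lemma:
`e^{−t} Σ_{m ≥ n} 4^m Σ_{j ≥ m} t^j/j! ≤ exp{4t + n log(4t) − (n/2) log n + (n/2) log 2}`. -/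
theorem stmt1 (t : ℝ) (ht : 0 < t) (n : ℕ) (hn : 1 ≤ n) :
    Real.exp (-t) *
      ∑' m : ℕ, (if n ≤ m then
        (4 : ℝ) ^ m * ∑' j : ℕ, (if m ≤ j then t ^ j / (Nat.factorial j : ℝ) else 0)
      else 0)
    ≤ Real.exp (4 * t + n * Real.log (4 * t) - (n / 2 : ℝ) * Real.log n
        + (n / 2 : ℝ) * Real.log 2) :=
  stmt1_general t ht n
end

section
/- Let p ∈ (0,1), let N ≥ 1 and let ω = (ω₁,…,ω_N) be i.i.d. Bernoulli(p) in {−1,1} (with P[ωᵢ = 1] = p). Let A ⊆ {−1,1}^N be an increasing event and S ⊆ {1,…,N} a set of coordinates. Say S is jointly pivotal for ω if setting all coordinates in S to −1 takes ω out of A while setting them all to +1 puts ω in A. Then P[S is jointly pivotal] ≤ (1/min(p,1−p))^{|S|} Σ_{x∈S} P[x is pivotal], where x is pivotal for ω if changing only coordinate x changes 1_A(ω). -/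
open MeasureTheory ProbabilityTheory

/-- Set all coordinates of `ω` in `S` to the value `b`. -/
def setOn {N : ℕ} (S : Finset (Fin N)) (b : Bool) (ω : Fin N → Bool) : Fin N → Bool :=
  fun i => if i ∈ S then b else ω i

/-!
Set the sites of `S` from `false` to `true` one at a time. At the first site `x`, either `x` is
already pivotal for `setOn S false ω`, or, once `x` is set to `true`, the remaining sites are still
jointly pivotal. Relabelling `ω ↦ update ω x b` multiplies probabilities by at most
`C = 1 / min p (1 - p)`, because its fibre over any `τ` with `τ x = b` has mass `μ {τ} / P[ω x = τ x]`;
induction on `S` then gives the factor `C ^ #S`.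
-/

open scoped ENNReal Finset

namespace MeasureTheory.Measure

variable {α : Type*} [MeasurableSpace α] [Countable α] [MeasurableSingletonClass α]

theorem le_smul_of_forall_singleton_le {μ ν : Measure α} {C : ℝ≥0∞}
    (h : ∀ a, μ {a} ≤ C * ν {a}) : μ ≤ C • ν := by
  refine le_iff.2 fun s hs => ?_
  rw [← sum_smul_dirac μ, ← sum_smul_dirac ν]
  simp only [smul_apply, sum_apply _ hs, smul_eq_mul, ← ENNReal.tsum_mul_left, ← mul_assoc]
  exact ENNReal.tsum_le_tsum fun a => mul_le_mul_left (h a) _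

theorem pi_preimage_update_le {ι : Type*} [Fintype ι] [DecidableEq ι] (ν : ι → Measure α)
    [∀ i, IsProbabilityMeasure (ν i)] {C : ℝ≥0∞} {x : ι} {a : α} (hC : 1 ≤ C * ν x {a})
    (B : Set (ι → α)) :
    Measure.pi ν ((Function.update · x a) ⁻¹' B) ≤ C * Measure.pi ν B := by
  suffices (Measure.pi ν).map (Function.update · x a) ≤ C • Measure.pi ν by
    simpa [map_apply Measurable.of_discrete MeasurableSet.of_discrete] using le_iff'.1 this B
  refine le_smul_of_forall_singleton_le fun τ => ?_
  rw [map_apply Measurable.of_discrete (measurableSet_singleton τ)]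
  by_cases hτ : τ x = a
  · have hfiber : (Function.update · x a) ⁻¹' {τ}
        = Set.univ.pi (Function.update (fun i => {τ i}) x Set.univ) := by
      ext ω
      rw [Set.mem_preimage, Set.mem_singleton_iff, Function.update_eq_iff, Set.mem_univ_pi]
      refine ⟨fun h i => ?_, fun h => ⟨hτ.symm, fun i hi => by simpa [hi] using h i⟩⟩
      rcases eq_or_ne i x with rfl | hi
      · simp
      · simpa [hi] using h.2 i hi
    rw [hfiber, pi_pi, pi_singleton, Fintype.prod_eq_mul_prod_compl x,
      Fintype.prod_eq_mul_prod_compl x, hτ]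
    simp only [Function.update_self, measure_univ, one_mul]
    rw [← mul_assoc]
    refine le_mul_of_one_le_of_le hC (Finset.prod_le_prod' fun i hi => ?_)
    rw [Function.update_of_ne (Finset.mem_compl.1 hi ∘ Finset.mem_singleton.2)]
  · have hfiber : (Function.update · x a) ⁻¹' {τ} = ∅ := by
      ext ω
      simp only [Set.mem_preimage, Set.mem_singleton_iff, Set.mem_empty_iff_false, iff_false]
      rintro rfl
      simp at hτ
    simp [hfiber]

end MeasureTheory.Measure

section Pivotal

variable {N : ℕ}

def jointlyPivotal (A : Set (Fin N → Bool)) (S : Finset (Fin N)) : Set (Fin N → Bool) :=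
  {ω | setOn S false ω ∉ A ∧ setOn S true ω ∈ A}

def pivotal (A : Set (Fin N → Bool)) (x : Fin N) : Set (Fin N → Bool) :=
  {ω | Function.update ω x false ∉ A ∧ Function.update ω x true ∈ A}

@[simp]
theorem setOn_empty (b : Bool) : setOn (∅ : Finset (Fin N)) b = id := rfl

theorem setOn_insert (x : Fin N) (T : Finset (Fin N)) (b : Bool) :
    setOn (insert x T) b = setOn T b ∘ (Function.update · x b) := by
  funext ω i
  rcases eq_or_ne i x with rfl | hi <;> simp [setOn, *]

theorem setOn_update_of_notMem {x : Fin N} {T : Finset (Fin N)} (hx : x ∉ T) (b c : Bool)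
    (ω : Fin N → Bool) :
    setOn T b (Function.update ω x c) = Function.update (setOn T b ω) x c := by
  funext i
  rcases eq_or_ne i x with rfl | hi <;> simp [setOn, *]

theorem jointlyPivotal_insert_subset (A : Set (Fin N → Bool)) {x : Fin N} {T : Finset (Fin N)}
    (hx : x ∉ T) :
    jointlyPivotal A (insert x T)
      ⊆ setOn (insert x T) false ⁻¹' pivotal A x
        ∪ (Function.update · x true) ⁻¹' jointlyPivotal A T := by
  rintro ω ⟨h_false, h_true⟩
  simp only [setOn_insert, Function.comp_apply, setOn_update_of_notMem hx] at h_false h_true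
  simp only [Set.mem_union, Set.mem_preimage, pivotal, jointlyPivotal, Set.mem_ofPred_eq,
    setOn_insert, Function.comp_apply, setOn_update_of_notMem hx, Function.update_idem]
  by_cases h : Function.update (setOn T false ω) x true ∈ A
  · exact Or.inl ⟨h_false, h⟩
  · exact Or.inr ⟨h, h_true⟩

variable {μ : Measure (Fin N → Bool)} {C : ℝ≥0∞}

theorem measure_setOn_preimage_le
    (hμ : ∀ x b B, μ ((Function.update · x b) ⁻¹' B) ≤ C * μ B)
    (S : Finset (Fin N)) (b : Bool) (B : Set (Fin N → Bool)) :
    μ (setOn S b ⁻¹' B) ≤ C ^ #S * μ B := by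
  induction S using Finset.induction_on with
  | empty => simp
  | insert x T hx ih =>
    calc μ (setOn (insert x T) b ⁻¹' B)
        = μ ((Function.update · x b) ⁻¹' (setOn T b ⁻¹' B)) := by rw [setOn_insert]; rfl
      _ ≤ C * (C ^ #T * μ B) := (hμ x b _).trans (mul_le_mul_right ih C)
      _ = C ^ #(insert x T) * μ B := by rw [Finset.card_insert_of_notMem hx, pow_succ']; ring

theorem measure_jointlyPivotal_le
    (hμ : ∀ x b B, μ ((Function.update · x b) ⁻¹' B) ≤ C * μ B)
    (A : Set (Fin N → Bool)) (S : Finset (Fin N)) :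
    μ (jointlyPivotal A S) ≤ C ^ #S * ∑ x ∈ S, μ (pivotal A x) := by
  induction S using Finset.induction_on with
  | empty => simp [jointlyPivotal]
  | insert x T hx ih =>
    calc μ (jointlyPivotal A (insert x T))
        ≤ μ (setOn (insert x T) false ⁻¹' pivotal A x)
          + μ ((Function.update · x true) ⁻¹' jointlyPivotal A T) :=
          (measure_mono (jointlyPivotal_insert_subset A hx)).trans (measure_union_le _ _)
      _ ≤ C ^ #(insert x T) * μ (pivotal A x) + C * (C ^ #T * ∑ y ∈ T, μ (pivotal A y)) :=
          add_le_add (measure_setOn_preimage_le hμ _ _ _)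
            ((hμ x true _).trans (mul_le_mul_right ih C))
      _ = C ^ #(insert x T) * ∑ y ∈ insert x T, μ (pivotal A y) := by
          rw [Finset.sum_insert hx, Finset.card_insert_of_notMem hx, pow_succ']
          ring

end Pivotal

theorem one_le_ofReal_one_div_min_mul_bernoulli {p : ℝ} (hp : p ∈ Set.Ioo (0 : ℝ) 1)
    (h : Real.toNNReal p ≤ 1) (b : Bool) :
    1 ≤ ENNReal.ofReal (1 / min p (1 - p)) *
      (PMF.bernoulli (Real.toNNReal p) h).toMeasure {b} := by
  have hmin : 0 < min p (1 - p) := lt_min hp.1 (sub_pos.2 hp.2)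
  have hb : (PMF.bernoulli (Real.toNNReal p) h).toMeasure {b}
      = ENNReal.ofReal (cond b p (1 - p)) := by
    rw [PMF.toMeasure_apply_singleton _ _ (measurableSet_singleton b), PMF.bernoulli_apply]
    cases b
    · simp only [cond_false]
      rw [ENNReal.ofReal_sub _ hp.1.le, ENNReal.ofReal_one]
      rfl
    · rfl
  rw [hb, ← ENNReal.ofReal_mul (by positivity), ENNReal.one_le_ofReal, one_div_mul_eq_div,
    one_le_div hmin]
  cases b
  · exact min_le_right _ _
  · exact min_le_left _ _

/-- Single-site extraction step of the Aizenman–Grimmett argument: for product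
Bernoulli(p) measure, an increasing event `A` and a set `S` of coordinates,
`P[S jointly pivotal] ≤ (1/min(p,1−p))^{|S|} Σ_{x∈S} P[x pivotal]`. -/
theorem stmt17 (p : ℝ) (hp : p ∈ Set.Ioo (0 : ℝ) 1) (N : ℕ)
    (μ : Measure (Fin N → Bool))
    (hμ : μ = Measure.pi (fun _ =>
      (PMF.bernoulli (Real.toNNReal p) (by
        simpa using Real.toNNReal_le_one.mpr hp.2.le)).toMeasure))
    (A : Set (Fin N → Bool))
    (S : Finset (Fin N)) :
    μ {ω | setOn S false ω ∉ A ∧ setOn S true ω ∈ A}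
      ≤ ENNReal.ofReal ((1 / min p (1 - p)) ^ S.card) *
        ∑ x ∈ S, μ {ω | Function.update ω x false ∉ A ∧ Function.update ω x true ∈ A} := by
  have hmin : 0 < min p (1 - p) := lt_min hp.1 (sub_pos.2 hp.2)
  rw [ENNReal.ofReal_pow (by positivity)]
  subst hμ
  exact measure_jointlyPivotal_le (fun x b B => Measure.pi_preimage_update_le (ι := Fin N) _
    (one_le_ofReal_one_div_min_mul_bernoulli hp _ b) B) A S
end
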